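/- In the flip graph of (◇^n, φ), the maximum over all φ-monotone paths γ of the minimum flip-graph distance from γ to a combinatorially coherent φ-monotone path equals n − 2, for n ≥ 2. -/

import Mathlib

open scoped BigOperators

/-- The `i`-th standard basis vector of `ℝ^n`. -/
noncomputable def stdVec (n : ℕ) (i : Fin n) : Fin n → ℝ := Pi.single i 1

/-- The last standard basis vector `e_n` of `ℝ^{n+2}`. -/
noncomputable def lastVec (n : ℕ) : Fin (n + 2) → ℝ := stdVec (n + 2) (Fin.last (n + 1))

/-- The linear functional `φ(x) = ∑ i, a i * x i`. -/
def phi (n : ℕ) (a : Fin (n + 2) → ℝ) (x : Fin (n + 2) → ℝ) : ℝ := ∑ i, a i * x i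

/-- A vertex of the cross-polytope `◇^n`: one of the `2n` points `±e_i`. -/
def IsCPVertex (n : ℕ) (x : Fin n → ℝ) : Prop :=
  ∃ i : Fin n, x = stdVec n i ∨ x = -stdVec n i

/-- The cross-polytope `◇^n = conv{±e_1, …, ±e_n}`. -/
noncomputable def crossPoly (n : ℕ) : Set (Fin n → ℝ) :=
  convexHull ℝ {x | IsCPVertex n x}

/-- A `φ`-monotone path on `◇^{n+2}`, encoded as the list of its vertices:
it starts at `-e_n`, ends at `e_n`, visits only vertices, is strictly `φ`-increasing,
and consecutive vertices are not antipodal. -/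
def IsMonoPath (n : ℕ) (a : Fin (n + 2) → ℝ) (l : List (Fin (n + 2) → ℝ)) : Prop :=
  l.head? = some (-lastVec n) ∧
  l.getLast? = some (lastVec n) ∧
  (∀ v ∈ l, IsCPVertex (n + 2) v) ∧
  l.Chain' (fun u v => phi n a u < phi n a v ∧ v ≠ -u)

/-- A monotone path is combinatorially coherent if no antipodal pair `±e_j`
(`j ∈ {1, …, n-1}`) occurs among its interior vertices. -/
def CombCoherent (n : ℕ) (l : List (Fin (n + 2) → ℝ)) : Prop :=
  ¬ ∃ j : Fin (n + 1), stdVec (n + 2) j.castSucc ∈ l.tail.dropLast ∧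
      -stdVec (n + 2) j.castSucc ∈ l.tail.dropLast

/-- The Billera–Sturmfels point `p(γ)` associated to a monotone path. -/
noncomputable def pathPoint (n : ℕ) (a : Fin (n + 2) → ℝ) (l : List (Fin (n + 2) → ℝ)) :
    Fin (n + 2) → ℝ :=
  ((l.zip l.tail).map fun q =>
    ((phi n a q.2 - phi n a q.1) / (4 * a (Fin.last (n + 1)))) • (q.1 + q.2)).sum

/-- The monotone path polytope `MPP_φ(◇^{n+2})`. -/
noncomputable def MPP (n : ℕ) (a : Fin (n + 2) → ℝ) : Set (Fin (n + 2) → ℝ) :=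
  convexHull ℝ {x | ∃ l, IsMonoPath n a l ∧ x = pathPoint n a l}

open Classical in
/-- The sign vector `σ(γ) ∈ {-1,0,1}^{n+1}` of a monotone path. -/
noncomputable def sigmaVec (n : ℕ) (l : List (Fin (n + 2) → ℝ)) : Fin (n + 1) → ℤ :=
  fun j =>
    if stdVec (n + 2) j.castSucc ∈ l then 1
    else if -stdVec (n + 2) j.castSucc ∈ l then -1 else 0


/-- `δ` is obtained from `γ` by deleting exactly one interior vertex. -/
def IsFlipDeletion (n : ℕ) (γ δ : List (Fin (n + 2) → ℝ)) : Prop :=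
  ∃ k : ℕ, 1 ≤ k ∧ k + 1 < γ.length ∧ δ = γ.eraseIdx k

/-- The flip graph of `(◇^{n+2}, φ)`: vertices are the `φ`-monotone paths, two paths
being adjacent iff one is obtained from the other by deleting one interior vertex. -/
def flipGraph (n : ℕ) (a : Fin (n + 2) → ℝ) :
    SimpleGraph {l : List (Fin (n + 2) → ℝ) // IsMonoPath n a l} where
  Adj γ δ := IsFlipDeletion n γ.1 δ.1 ∨ IsFlipDeletion n δ.1 γ.1
  symm := by
    constructor
    intro γ δ h
    exact h.symm
  loopless := by
    constructor
    rintro γ (⟨k, hk1, hk2, hk3⟩ | ⟨k, hk1, hk2, hk3⟩) <;>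
    · have hlen := congrArg List.length hk3
      have h2 : ((γ.1).eraseIdx k).length + 1 = γ.1.length :=
        List.length_eraseIdx_add_one (by omega)
      omega

/-!
Let `incoherentIdx n γ` be the set of `j < n + 1` with both `±e_j` on `γ`; its size vanishes
exactly on coherent paths and changes by at most one along a flip. It never contains `0`: the
predecessor of `e₀` would have `φ ∈ [-a₀, a₀)`, so it would be `-e₀`, antipodal to `e₀`. Hence it
has at most `n` elements, and deleting `e_j` for any incoherent `j` is a flip that removes `j`,
which gives the upper bound. The path `-e_{n+1}, …, -e₁, e₀, …, e_{n+1}` has `n` incoherent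
indices, and for `n ≥ 1` the flip graph is connected, so it is at distance at least `n` from every
coherent path.
-/

open Finset

section Vertices

variable {n : ℕ} {a : Fin (n + 2) → ℝ}

lemma stdVec_injective (n : ℕ) : Function.Injective (stdVec n) := fun i j h => by
  by_contra hij
  simpa [stdVec, Pi.single_apply, hij] using congrFun h i

lemma stdVec_ne_neg (n : ℕ) (i j : Fin n) : stdVec n i ≠ -stdVec n j := fun h => by
  have := congrFun h i
  by_cases hij : i = j <;> simp [stdVec, hij] at this
  norm_num [hij] at this

lemma phi_stdVec (a : Fin (n + 2) → ℝ) (i : Fin (n + 2)) :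
    phi n a (stdVec (n + 2) i) = a i := by
  simp [phi, stdVec, Pi.single_apply]

lemma phi_neg (a : Fin (n + 2) → ℝ) (x : Fin (n + 2) → ℝ) : phi n a (-x) = -phi n a x := by
  simp [phi, Finset.sum_neg_distrib]

lemma stdVec_castSucc_ne_lastVec (j : Fin (n + 1)) : stdVec (n + 2) j.castSucc ≠ lastVec n :=
  fun he => Fin.castSucc_ne_last j (stdVec_injective _ he)

lemma pos_of_monotone (h0 : 0 < a 0) (ha : Monotone a) (i : Fin (n + 2)) : 0 < a i :=
  h0.trans_le (ha (Fin.zero_le i))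

lemma eq_of_phi_eq (h0 : 0 < a 0) (ha : StrictMono a) {u v : Fin (n + 2) → ℝ}
    (hu : IsCPVertex (n + 2) u) (hv : IsCPVertex (n + 2) v) (h : phi n a u = phi n a v) :
    u = v := by
  obtain ⟨i, rfl | rfl⟩ := hu <;> obtain ⟨j, rfl | rfl⟩ := hv <;>
    simp only [phi_neg, phi_stdVec, neg_inj] at h
  · rw [ha.injective h]
  · linarith [pos_of_monotone h0 ha.monotone i, pos_of_monotone h0 ha.monotone j]
  · linarith [pos_of_monotone h0 ha.monotone i, pos_of_monotone h0 ha.monotone j]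
  · rw [ha.injective h]

lemma eq_neg_stdVec_zero (ha : StrictMono a) {x : Fin (n + 2) → ℝ} (hx : IsCPVertex (n + 2) x)
    (hlo : -a 0 ≤ phi n a x) (hhi : phi n a x < a 0) : x = -stdVec (n + 2) 0 := by
  obtain ⟨i, rfl | rfl⟩ := hx
  · rw [phi_stdVec] at hhi
    exact absurd (ha.lt_iff_lt.1 hhi) (Fin.not_lt_zero i)
  · rw [phi_neg, phi_stdVec, neg_le_neg_iff, ha.le_iff_le] at hlo
    rw [Fin.le_zero_iff.1 hlo]

end Vertices

section Lists

variable {α : Type*}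

lemma List.exists_eq_append_cons_cons_of_mem_tail_dropLast {l : List α} {v : α}
    (hv : v ∈ l.tail.dropLast) : ∃ p x y s, l = p ++ x :: v :: y :: s := by
  rcases l with _ | ⟨x₀, t⟩
  · simp at hv
  have ht : t ≠ [] := by rintro rfl; simp at hv
  obtain ⟨m₁, m₂, hm⟩ := List.append_of_mem (by simpa using hv)
  obtain ⟨p, x, hpx⟩ : ∃ p x, x₀ :: m₁ = p ++ [x] :=
    ⟨(x₀ :: m₁).dropLast, _, (List.dropLast_append_getLast (List.cons_ne_nil _ _)).symm⟩
  obtain ⟨y, s, hys⟩ : ∃ y s, m₂ ++ [t.getLast ht] = y :: s := by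
    cases m₂ <;> simp
  refine ⟨p, x, y, s, ?_⟩
  rw [← List.dropLast_append_getLast ht, hm]
  simp only [List.append_assoc, List.cons_append, hys]
  rw [← List.cons_append, hpx]
  simp

lemma List.le_of_mem_append_cons_cons {β : Type*} [LinearOrder β] {f : α → β}
    {p s : List α} {x v w : α} (hl : (p ++ x :: v :: s).Pairwise fun u u' => f u < f u')
    (hw : w ∈ p ++ x :: v :: s) (hwv : f w < f v) : f w ≤ f x := by
  rw [List.pairwise_append] at hl
  simp only [List.pairwise_cons, List.mem_cons] at hl
  simp only [List.mem_append, List.mem_cons] at hw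
  rcases hw with hw | rfl | rfl | hw
  · exact (hl.2.2 w hw x (Or.inl rfl)).le
  · exact le_rfl
  · exact absurd hwv (lt_irrefl _)
  · exact absurd hwv (hl.2.1.2.1 w hw).not_gt

end Lists

section MonoPath

variable {n : ℕ} {a : Fin (n + 2) → ℝ} {l : List (Fin (n + 2) → ℝ)}

lemma isMonoPath_iff : IsMonoPath n a l ↔ l.head? = some (-lastVec n) ∧
    l.getLast? = some (lastVec n) ∧ (∀ v ∈ l, IsCPVertex (n + 2) v) ∧
    l.IsChain (fun u v => phi n a u < phi n a v ∧ v ≠ -u) :=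
  Iff.rfl

lemma IsMonoPath.pairwise (h : IsMonoPath n a l) :
    l.Pairwise fun u v => phi n a u < phi n a v :=
  List.pairwise_map.1
    ((List.isChain_map _).2 ((isMonoPath_iff.1 h).2.2.2.imp fun _ _ huv => huv.1)).pairwise

lemma IsMonoPath.isCPVertex (h : IsMonoPath n a l) {v : Fin (n + 2) → ℝ} (hv : v ∈ l) :
    IsCPVertex (n + 2) v :=
  h.2.2.1 v hv

lemma IsMonoPath.nodup (h : IsMonoPath n a l) : l.Nodup :=
  h.pairwise.imp fun huv he => huv.ne (congrArg _ he)

lemma IsMonoPath.eq_cons_append (h : IsMonoPath n a l) :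
    l = -lastVec n :: l.tail.dropLast ++ [lastVec n] := by
  obtain ⟨hhead, hlast, -, -⟩ := h
  rcases l with _ | ⟨x, t⟩
  · simp at hhead
  obtain rfl : x = -lastVec n := by simpa using hhead
  have ht : t ≠ [] := by
    rintro rfl
    exact stdVec_ne_neg _ _ _ (Option.some_inj.1 hlast).symm
  conv_lhs => rw [← List.dropLast_append_getLast? _ hlast, List.dropLast_cons_of_ne_nil ht]
  rfl

lemma IsMonoPath.mem_tail_dropLast_iff (h : IsMonoPath n a l) {v : Fin (n + 2) → ℝ}
    (hv₁ : v ≠ -lastVec n) (hv₂ : v ≠ lastVec n) : v ∈ l.tail.dropLast ↔ v ∈ l := by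
  conv_rhs => rw [h.eq_cons_append]
  simp [hv₁, hv₂]

lemma IsMonoPath.erase_middle {p s : List (Fin (n + 2) → ℝ)} {x v y : Fin (n + 2) → ℝ}
    (h : IsMonoPath n a (p ++ x :: v :: y :: s)) (hxy : y ≠ -x) :
    IsMonoPath n a (p ++ x :: y :: s) := by
  obtain ⟨hhead, hlast, hvert, hchain⟩ := isMonoPath_iff.1 h
  refine ⟨by simpa using hhead, by simpa using hlast,
    fun w hw => hvert w (by simp at hw ⊢; tauto), ?_⟩
  rw [List.isChain_append_cons_cons, List.isChain_cons_cons] at hchain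
  obtain ⟨hp, hxv, hvy, hs⟩ := hchain
  exact List.isChain_append_cons_cons.2 ⟨hp, ⟨hxv.1.trans hvy.1, hxy⟩, hs⟩

end MonoPath

section Incoherence

variable {n : ℕ} {a : Fin (n + 2) → ℝ}

lemma isFlipDeletion_append_cons_cons (p : List (Fin (n + 2) → ℝ)) (x v y : Fin (n + 2) → ℝ)
    (s : List (Fin (n + 2) → ℝ)) : IsFlipDeletion n (p ++ x :: v :: y :: s) (p ++ x :: y :: s) :=
  ⟨p.length + 1, by omega, by simp; omega,
    by rw [List.eraseIdx_append_of_length_le (by simp)]; simp⟩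

lemma IsFlipDeletion.subset {γ δ : List (Fin (n + 2) → ℝ)} (h : IsFlipDeletion n γ δ) :
    δ ⊆ γ := by
  obtain ⟨k, -, -, rfl⟩ := h
  exact List.eraseIdx_subset

lemma IsFlipDeletion.exists_subset_cons {γ δ : List (Fin (n + 2) → ℝ)}
    (h : IsFlipDeletion n γ δ) : ∃ v, γ ⊆ v :: δ := by
  obtain ⟨k, -, hk, rfl⟩ := h
  refine ⟨γ[k], fun w hw => ?_⟩
  obtain ⟨i, hi, rfl⟩ := List.getElem_of_mem hw
  by_cases hik : i = k
  · subst hik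
    exact List.mem_cons_self
  · exact List.mem_cons_of_mem _ (List.mem_eraseIdx_iff_getElem.2 ⟨i, hi, hik, rfl⟩)

open Classical in
/-- Membership is tested on the whole list; since `j` ranges over `Fin (n + 1)`, the endpoints
`±e_{n+1}` of a monotone path never matter. -/
noncomputable def incoherentIdx (n : ℕ) (l : List (Fin (n + 2) → ℝ)) : Finset (Fin (n + 1)) :=
  univ.filter fun j => stdVec (n + 2) j.castSucc ∈ l ∧ -stdVec (n + 2) j.castSucc ∈ l

lemma mem_incoherentIdx {l : List (Fin (n + 2) → ℝ)} {j : Fin (n + 1)} :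
    j ∈ incoherentIdx n l ↔ stdVec (n + 2) j.castSucc ∈ l ∧ -stdVec (n + 2) j.castSucc ∈ l := by
  simp [incoherentIdx]

lemma incoherentIdx_mono {l₁ l₂ : List (Fin (n + 2) → ℝ)} (h : l₁ ⊆ l₂) :
    incoherentIdx n l₁ ⊆ incoherentIdx n l₂ := fun j hj => by
  rw [mem_incoherentIdx] at hj ⊢
  exact ⟨h hj.1, h hj.2⟩

lemma card_incoherentIdx_le_of_subset_cons {l₁ l₂ : List (Fin (n + 2) → ℝ)}
    {v : Fin (n + 2) → ℝ} (h : l₁ ⊆ v :: l₂) :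
    #(incoherentIdx n l₁) ≤ #(incoherentIdx n l₂) + 1 := by
  have hv : ∀ j ∈ incoherentIdx n l₁ \ incoherentIdx n l₂,
      v = stdVec (n + 2) j.castSucc ∨ v = -stdVec (n + 2) j.castSucc := by
    intro j hj
    simp only [mem_sdiff, mem_incoherentIdx] at hj
    have h₁ := h hj.1.1
    have h₂ := h hj.1.2
    simp only [List.mem_cons] at h₁ h₂
    tauto
  have hsdiff : #(incoherentIdx n l₁ \ incoherentIdx n l₂) ≤ 1 := by
    refine card_le_one.2 fun i hi j hj => Fin.castSucc_injective _ ?_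
    rcases hv i hi with rfl | hvi <;> rcases hv j hj with hvj | hvj
    · exact stdVec_injective _ hvj
    · exact absurd hvj (stdVec_ne_neg _ _ _)
    · exact absurd (hvj.symm.trans hvi) (stdVec_ne_neg _ _ _)
    · exact stdVec_injective _ (neg_injective (hvi.symm.trans hvj))
  have := card_le_card_sdiff_add_card (s := incoherentIdx n l₁) (t := incoherentIdx n l₂)
  omega

lemma IsMonoPath.combCoherent_iff {l : List (Fin (n + 2) → ℝ)} (h : IsMonoPath n a l) :
    CombCoherent n l ↔ incoherentIdx n l = ∅ := by
  have hpos (j : Fin (n + 1)) : stdVec (n + 2) j.castSucc ∈ l.tail.dropLast ↔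
      stdVec (n + 2) j.castSucc ∈ l :=
    h.mem_tail_dropLast_iff (stdVec_ne_neg _ _ _) (stdVec_castSucc_ne_lastVec j)
  have hneg (j : Fin (n + 1)) : -stdVec (n + 2) j.castSucc ∈ l.tail.dropLast ↔
      -stdVec (n + 2) j.castSucc ∈ l :=
    h.mem_tail_dropLast_iff (neg_injective.ne (stdVec_castSucc_ne_lastVec j))
      fun he => stdVec_ne_neg _ _ _ (neg_eq_iff_eq_neg.1 he)
  simp [CombCoherent, eq_empty_iff_forall_notMem, mem_incoherentIdx, hpos, hneg]

end Incoherence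

section Descent

variable {n : ℕ} {a : Fin (n + 2) → ℝ} {l : List (Fin (n + 2) → ℝ)}

lemma IsMonoPath.exists_eq_append_cons_stdVec (h : IsMonoPath n a l) {j : Fin (n + 1)}
    (hj : stdVec (n + 2) j.castSucc ∈ l) :
    ∃ p x y s, l = p ++ x :: stdVec (n + 2) j.castSucc :: y :: s :=
  List.exists_eq_append_cons_cons_of_mem_tail_dropLast <|
    (h.mem_tail_dropLast_iff (stdVec_ne_neg _ _ _) (stdVec_castSucc_ne_lastVec j)).2 hj

lemma IsMonoPath.neg_le_phi_pred {p s : List (Fin (n + 2) → ℝ)} {x : Fin (n + 2) → ℝ}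
    {i : Fin (n + 2)} (h : IsMonoPath n a (p ++ x :: stdVec (n + 2) i :: s))
    (hi : 0 < a i) (hneg : -stdVec (n + 2) i ∈ p ++ x :: stdVec (n + 2) i :: s) :
    -a i ≤ phi n a x := by
  have hlt : phi n a (-stdVec (n + 2) i) < phi n a (stdVec (n + 2) i) := by
    rw [phi_neg, phi_stdVec]
    linarith
  simpa [phi_neg, phi_stdVec] using List.le_of_mem_append_cons_cons h.pairwise hneg hlt

lemma IsMonoPath.zero_notMem_incoherentIdx (h0 : 0 < a 0) (ha : StrictMono a)
    (h : IsMonoPath n a l) : (0 : Fin (n + 1)) ∉ incoherentIdx n l := by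
  rintro hz
  obtain ⟨hpos, hneg⟩ := mem_incoherentIdx.1 hz
  obtain ⟨p, x, y, s, rfl⟩ := h.exists_eq_append_cons_stdVec hpos
  obtain ⟨-, -, -, hchain⟩ := isMonoPath_iff.1 h
  obtain ⟨-, hxv, -⟩ := List.isChain_append_cons_cons.1 hchain
  simp only [Fin.castSucc_zero] at hneg hxv h
  have hx : x = -stdVec (n + 2) 0 :=
    eq_neg_stdVec_zero ha (h.isCPVertex (by simp)) (h.neg_le_phi_pred h0 hneg)
      (by simpa [phi_stdVec] using hxv.1)
  exact hxv.2 (by rw [hx, neg_neg])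

lemma IsMonoPath.card_incoherentIdx_le (h0 : 0 < a 0) (ha : StrictMono a)
    (h : IsMonoPath n a l) : #(incoherentIdx n l) ≤ n := by
  have hsub : incoherentIdx n l ⊆ univ.erase 0 := fun j hj =>
    mem_erase.2 ⟨fun hj0 => h.zero_notMem_incoherentIdx h0 ha (hj0 ▸ hj), mem_univ _⟩
  simpa using card_le_card hsub

/-- Deleting `e_j` for an incoherent index `j` keeps the path monotone: its neighbours `x`, `y`
satisfy `-a_j ≤ φ x` and `a_j < φ y`, so they cannot be antipodal. -/
lemma IsMonoPath.exists_flip_card_incoherentIdx_lt (h0 : 0 < a 0) (ha : StrictMono a)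
    (h : IsMonoPath n a l) {j : Fin (n + 1)} (hj : j ∈ incoherentIdx n l) :
    ∃ l', IsMonoPath n a l' ∧ IsFlipDeletion n l l' ∧
      #(incoherentIdx n l') < #(incoherentIdx n l) := by
  obtain ⟨hpos, hneg⟩ := mem_incoherentIdx.1 hj
  obtain ⟨p, x, y, s, rfl⟩ := h.exists_eq_append_cons_stdVec hpos
  obtain ⟨-, -, -, hchain⟩ := isMonoPath_iff.1 h
  rw [List.isChain_append_cons_cons, List.isChain_cons_cons] at hchain
  obtain ⟨-, -, hvy, -⟩ := hchain
  have hlo := h.neg_le_phi_pred (pos_of_monotone h0 ha.monotone _) hneg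
  have hxy : y ≠ -x := fun hyx => by
    rw [hyx, phi_neg, phi_stdVec] at hvy
    linarith [hvy.1]
  have hflip := isFlipDeletion_append_cons_cons p x (stdVec (n + 2) j.castSucc) y s
  refine ⟨_, h.erase_middle hxy, hflip, card_lt_card ?_⟩
  refine (ssubset_iff_of_subset (incoherentIdx_mono hflip.subset)).2 ⟨j, hj, fun hj' => ?_⟩
  have hnd := h.nodup
  rw [show p ++ x :: stdVec (n + 2) j.castSucc :: y :: s
      = (p ++ [x]) ++ stdVec (n + 2) j.castSucc :: y :: s by simp, List.nodup_middle] at hnd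
  exact (List.nodup_cons.1 hnd).1 (by simpa using (mem_incoherentIdx.1 hj').1)

end Descent

namespace SimpleGraph

variable {V : Type*} {G : SimpleGraph V} (f : V → ℕ)

lemma Walk.le_add_length (hf : ∀ u v, G.Adj u v → f u ≤ f v + 1) {u v : V} (w : G.Walk u v) :
    f u ≤ f v + w.length := by
  induction w with
  | nil => simp
  | cons hadj _ ih =>
    rw [Walk.length_cons]
    have := hf _ _ hadj
    omega

lemma Reachable.le_add_dist (hf : ∀ u v, G.Adj u v → f u ≤ f v + 1) {u v : V}
    (h : G.Reachable u v) : f u ≤ f v + G.dist u v := by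
  obtain ⟨w, hw⟩ := h.exists_walk_length_eq_dist
  exact hw ▸ w.le_add_length f hf

lemma exists_walk_length_le_of_exists_adj_lt (hf : ∀ u, f u ≠ 0 → ∃ v, G.Adj u v ∧ f v < f u)
    (u : V) : ∃ v, f v = 0 ∧ ∃ w : G.Walk u v, w.length ≤ f u := by
  induction hk : f u using Nat.strong_induction_on generalizing u with
  | _ k ih =>
    by_cases hu : f u = 0
    · exact ⟨u, hu, .nil, by simp⟩
    obtain ⟨v, huv, hlt⟩ := hf u hu
    obtain ⟨x, hx, w, hw⟩ := ih (f v) (hk ▸ hlt) v rfl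
    exact ⟨x, hx, .cons huv w, by rw [Walk.length_cons]; omega⟩

end SimpleGraph

section FlipGraph

variable {n : ℕ} {a : Fin (n + 2) → ℝ}

lemma flipGraph_adj_card_incoherentIdx_le {γ δ : {l : List (Fin (n + 2) → ℝ) // IsMonoPath n a l}}
    (h : (flipGraph n a).Adj γ δ) : #(incoherentIdx n γ.1) ≤ #(incoherentIdx n δ.1) + 1 := by
  rcases h with h | h
  · obtain ⟨v, hv⟩ := h.exists_subset_cons
    exact card_incoherentIdx_le_of_subset_cons hv
  · exact (card_le_card (incoherentIdx_mono h.subset)).trans (Nat.le_succ _)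

lemma isMonoPath_triple_stdVec (h0 : 0 < a 0) (ha : StrictMono a) (j : Fin (n + 1)) :
    IsMonoPath n a [-lastVec n, stdVec (n + 2) j.castSucc, lastVec n] := by
  refine isMonoPath_iff.2 ⟨rfl, rfl, ?_, ?_⟩
  · simp only [List.mem_cons, List.not_mem_nil, or_false]
    rintro v (rfl | rfl | rfl)
    exacts [⟨_, Or.inr rfl⟩, ⟨_, Or.inl rfl⟩, ⟨_, Or.inl rfl⟩]
  · have hlt : a j.castSucc < a (Fin.last (n + 1)) := ha (Fin.castSucc_lt_last j)
    simp only [List.isChain_cons_cons, List.isChain_singleton, and_true, neg_neg, lastVec,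
      phi_neg, phi_stdVec]
    exact ⟨⟨by linarith [pos_of_monotone h0 ha.monotone j.castSucc],
      stdVec_castSucc_ne_lastVec j⟩, hlt, stdVec_ne_neg _ _ _⟩

lemma IsMonoPath.exists_castSucc_of_triple {x : Fin (n + 2) → ℝ}
    (h : IsMonoPath n a [-lastVec n, x, lastVec n]) :
    ∃ j : Fin (n + 1), x = stdVec (n + 2) j.castSucc ∨ x = -stdVec (n + 2) j.castSucc := by
  obtain ⟨i, hi⟩ := h.isCPVertex (v := x) (by simp)
  obtain ⟨-, -, -, hchain⟩ := isMonoPath_iff.1 h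
  simp only [List.isChain_cons_cons, List.isChain_singleton, and_true, neg_neg] at hchain
  obtain ⟨j, rfl⟩ := (Fin.exists_castSucc_eq (i := i)).2 fun hil => by
    subst hil
    rcases hi with rfl | rfl
    · exact hchain.1.2 rfl
    · exact hchain.2.2 (neg_neg _).symm
  exact ⟨j, hi⟩

lemma isMonoPath_quad {x y : Fin (n + 2) → ℝ} (hx : IsMonoPath n a [-lastVec n, x, lastVec n])
    (hy : IsMonoPath n a [-lastVec n, y, lastVec n]) (hxy : phi n a x < phi n a y)
    (hne : y ≠ -x) : IsMonoPath n a [-lastVec n, x, y, lastVec n] := by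
  obtain ⟨-, -, hvx, hcx⟩ := isMonoPath_iff.1 hx
  obtain ⟨-, -, hvy, hcy⟩ := isMonoPath_iff.1 hy
  simp only [List.isChain_cons_cons, List.isChain_singleton, and_true] at hcx hcy
  refine isMonoPath_iff.2 ⟨rfl, rfl, fun v hv => ?_, ?_⟩
  · simp only [List.mem_cons, List.not_mem_nil, or_false] at hv
    rcases hv with rfl | rfl | rfl | rfl
    exacts [hvx _ (by simp), hvx _ (by simp), hvy _ (by simp), hvx _ (by simp)]
  · simp only [List.isChain_cons_cons, List.isChain_singleton, and_true]
    exact ⟨hcx.1, ⟨hxy, hne⟩, hcy.2⟩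

lemma reachable_triple_of_lt {x y : Fin (n + 2) → ℝ}
    (hx : IsMonoPath n a [-lastVec n, x, lastVec n])
    (hy : IsMonoPath n a [-lastVec n, y, lastVec n]) (hxy : phi n a x < phi n a y)
    (hne : y ≠ -x) : (flipGraph n a).Reachable ⟨_, hx⟩ ⟨_, hy⟩ := by
  have hq := isMonoPath_quad hx hy hxy hne
  have hqx : (flipGraph n a).Adj ⟨_, hq⟩ ⟨_, hx⟩ :=
    Or.inl (isFlipDeletion_append_cons_cons [-lastVec n] x y (lastVec n) [])
  have hqy : (flipGraph n a).Adj ⟨_, hq⟩ ⟨_, hy⟩ :=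
    Or.inl (isFlipDeletion_append_cons_cons [] (-lastVec n) x y [lastVec n])
  exact hqx.reachable.symm.trans hqy.reachable

lemma reachable_triple_of_ne_neg (h0 : 0 < a 0) (ha : StrictMono a) {x y : Fin (n + 2) → ℝ}
    (hx : IsMonoPath n a [-lastVec n, x, lastVec n])
    (hy : IsMonoPath n a [-lastVec n, y, lastVec n]) (hne : y ≠ -x) :
    (flipGraph n a).Reachable ⟨_, hx⟩ ⟨_, hy⟩ := by
  rcases lt_trichotomy (phi n a x) (phi n a y) with hlt | heq | hgt
  · exact reachable_triple_of_lt hx hy hlt hne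
  · obtain rfl := eq_of_phi_eq h0 ha (hx.isCPVertex (by simp)) (hy.isCPVertex (by simp)) heq
    rfl
  · exact (reachable_triple_of_lt hy hx hgt fun h => hne (by rw [h, neg_neg])).symm

/-- Antipodal `x` and `y = -x` are joined through a third vertex `e_k`, which needs `n ≥ 1`. -/
lemma reachable_triple (h0 : 0 < a 0) (ha : StrictMono a) (hn : 1 ≤ n) {x y : Fin (n + 2) → ℝ}
    (hx : IsMonoPath n a [-lastVec n, x, lastVec n])
    (hy : IsMonoPath n a [-lastVec n, y, lastVec n]) :
    (flipGraph n a).Reachable ⟨_, hx⟩ ⟨_, hy⟩ := by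
  by_cases hne : y = -x
  swap
  · exact reachable_triple_of_ne_neg h0 ha hx hy hne
  obtain ⟨i, hi⟩ := hx.exists_castSucc_of_triple
  have : Nontrivial (Fin (n + 1)) := Fin.nontrivial_iff_two_le.2 (by omega)
  obtain ⟨k, hk⟩ := exists_ne i
  have hki : stdVec (n + 2) k.castSucc ≠ stdVec (n + 2) i.castSucc := fun he =>
    hk (Fin.castSucc_injective _ (stdVec_injective _ he))
  have hzx : stdVec (n + 2) k.castSucc ≠ -x ∧ stdVec (n + 2) k.castSucc ≠ x := by
    rcases hi with rfl | rfl
    · exact ⟨stdVec_ne_neg _ _ _, hki⟩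
    · exact ⟨by rwa [neg_neg], stdVec_ne_neg _ _ _⟩
  have hz := isMonoPath_triple_stdVec h0 ha k
  refine (reachable_triple_of_ne_neg h0 ha hx hz hzx.1).trans
    (reachable_triple_of_ne_neg h0 ha hz hy ?_)
  rw [hne]
  exact fun h => hzx.2 (neg_injective h).symm

lemma exists_reachable_triple (m : List (Fin (n + 2) → ℝ))
    (h : IsMonoPath n a (-lastVec n :: m ++ [lastVec n])) :
    ∃ x, ∃ hx : IsMonoPath n a [-lastVec n, x, lastVec n],
      (flipGraph n a).Reachable ⟨_, h⟩ ⟨_, hx⟩ := by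
  induction m with
  | nil =>
    obtain ⟨-, -, -, hchain⟩ := isMonoPath_iff.1 h
    simp [List.isChain_cons_cons] at hchain
  | cons x m ih =>
    rcases m with _ | ⟨y, m⟩
    · exact ⟨x, h, .rfl⟩
    have hy : y ≠ lastVec n := by
      have := h.nodup
      simp only [List.cons_append, List.nodup_cons, List.mem_cons, List.mem_append] at this
      tauto
    have h' : IsMonoPath n a (-lastVec n :: y :: m ++ [lastVec n]) :=
      IsMonoPath.erase_middle (p := []) h (by rwa [neg_neg])
    obtain ⟨z, hz, hr⟩ := ih h'
    have hadj : (flipGraph n a).Adj ⟨_, h⟩ ⟨_, h'⟩ :=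
      Or.inl (isFlipDeletion_append_cons_cons [] _ x y (m ++ [lastVec n]))
    exact ⟨z, hz, hadj.reachable.trans hr⟩

lemma flipGraph_preconnected (h0 : 0 < a 0) (ha : StrictMono a) (hn : 1 ≤ n) :
    (flipGraph n a).Preconnected := by
  have hreach (γ : {l : List (Fin (n + 2) → ℝ) // IsMonoPath n a l}) :
      ∃ x, ∃ hx : IsMonoPath n a [-lastVec n, x, lastVec n],
        (flipGraph n a).Reachable γ ⟨_, hx⟩ := by
    obtain ⟨l, hl⟩ := γ
    have hdecomp := hl.eq_cons_append
    generalize l.tail.dropLast = m at hdecomp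
    subst hdecomp
    exact exists_reachable_triple m hl
  intro γ δ
  obtain ⟨x, hx, hγx⟩ := hreach γ
  obtain ⟨y, hy, hδy⟩ := hreach δ
  exact hγx.trans ((reachable_triple h0 ha hn hx hy).trans hδy.symm)

end FlipGraph

section Witness

variable {n : ℕ} {a : Fin (n + 2) → ℝ}

/-- The path `-e_{n+1}, …, -e_1, e_0, e_1, …, e_{n+1}` through all vertices but `-e_0`. -/
noncomputable def zigzagPath (n : ℕ) : List (Fin (n + 2) → ℝ) :=
  List.ofFn (fun j : Fin (n + 1) => -stdVec (n + 2) j.rev.succ) ++ List.ofFn (stdVec (n + 2))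

lemma isMonoPath_zigzagPath (h0 : 0 < a 0) (ha : StrictMono a) : IsMonoPath n a (zigzagPath n) := by
  refine isMonoPath_iff.2 ⟨?_, ?_, ?_, List.isChain_append.2 ⟨?_, ?_, ?_⟩⟩
  · simp [zigzagPath, lastVec]
  · rw [zigzagPath, List.getLast?_append, List.ofFn_succ_last (f := stdVec (n + 2)),
      List.getLast?_concat]
    rfl
  · simp only [zigzagPath, List.mem_append, List.mem_ofFn]
    rintro v (⟨j, rfl⟩ | ⟨i, rfl⟩)
    exacts [⟨_, Or.inr rfl⟩, ⟨_, Or.inl rfl⟩]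
  · refine (List.pairwise_ofFn.2 fun i j hij => ⟨?_, ?_⟩).isChain
    · simpa [phi_neg, phi_stdVec] using ha (Fin.succ_lt_succ_iff.2 (Fin.rev_lt_rev.2 hij))
    · rw [neg_neg]
      exact fun he => stdVec_ne_neg _ _ _ he.symm
  · refine (List.pairwise_ofFn.2 fun i j hij => ⟨?_, stdVec_ne_neg _ _ _⟩).isChain
    simpa [phi_stdVec] using ha hij
  · intro x hx y hy
    rw [List.ofFn_succ_last] at hx
    rw [List.ofFn_succ] at hy
    simp only [List.getLast?_concat, List.head?_cons, Option.mem_def, Option.some_inj] at hx hy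
    subst hx hy
    simp only [Fin.rev_last, Fin.succ_zero_eq_one, phi_neg, phi_stdVec, neg_neg]
    refine ⟨by linarith [pos_of_monotone h0 ha.monotone 1], fun he => ?_⟩
    exact zero_ne_one (stdVec_injective _ he)

lemma le_card_incoherentIdx_zigzagPath : n ≤ #(incoherentIdx n (zigzagPath n)) := by
  have hsub : univ.erase 0 ⊆ incoherentIdx n (zigzagPath n) := by
    intro j hj
    obtain ⟨k, rfl⟩ := Fin.exists_succ_eq.2 (mem_erase.1 hj).1
    rw [mem_incoherentIdx]
    simp only [zigzagPath, List.mem_append, List.mem_ofFn]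
    exact ⟨Or.inr ⟨_, rfl⟩, Or.inl ⟨k.castSucc.rev, by rw [Fin.rev_rev, Fin.succ_castSucc]⟩⟩
  simpa using card_le_card hsub

end Witness

/-- In the flip graph of `(◇^{n+2}, φ)`, the maximum over all
`φ`-monotone paths `γ` of the minimum flip distance from `γ` to a combinatorially
coherent path equals `n` (i.e. the paper's `n - 2`). -/
theorem max_flip_distance_to_coherent (n : ℕ) (a : Fin (n + 2) → ℝ)
    (h0 : 0 < a 0) (ha : StrictMono a) :
    (∀ γ : {l : List (Fin (n + 2) → ℝ) // IsMonoPath n a l},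
      ∃ δ : {l : List (Fin (n + 2) → ℝ) // IsMonoPath n a l},
        CombCoherent n δ.1 ∧ (flipGraph n a).dist γ δ ≤ n) ∧
    (∃ γ : {l : List (Fin (n + 2) → ℝ) // IsMonoPath n a l},
      ∀ δ : {l : List (Fin (n + 2) → ℝ) // IsMonoPath n a l},
        CombCoherent n δ.1 → n ≤ (flipGraph n a).dist γ δ) := by
  let f (γ : {l : List (Fin (n + 2) → ℝ) // IsMonoPath n a l}) : ℕ := #(incoherentIdx n γ.1)
  have hdescent (γ) (hγ : f γ ≠ 0) : ∃ δ, (flipGraph n a).Adj γ δ ∧ f δ < f γ := by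
    obtain ⟨j, hj⟩ := card_ne_zero.1 hγ
    obtain ⟨l, hl, hflip, hlt⟩ := γ.2.exists_flip_card_incoherentIdx_lt h0 ha hj
    exact ⟨⟨l, hl⟩, Or.inl hflip, hlt⟩
  constructor
  · intro γ
    obtain ⟨δ, hδ, w, hw⟩ := (flipGraph n a).exists_walk_length_le_of_exists_adj_lt f hdescent γ
    exact ⟨δ, δ.2.combCoherent_iff.2 (card_eq_zero.1 hδ),
      (SimpleGraph.dist_le w).trans (hw.trans (γ.2.card_incoherentIdx_le h0 ha))⟩
  · refine ⟨⟨_, isMonoPath_zigzagPath h0 ha⟩, fun δ hδ => ?_⟩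
    rcases Nat.eq_zero_or_pos n with rfl | hn
    · exact Nat.zero_le _
    have hreach := flipGraph_preconnected h0 ha hn ⟨_, isMonoPath_zigzagPath h0 ha⟩ δ
    have hdist := hreach.le_add_dist f fun _ _ => flipGraph_adj_card_incoherentIdx_le
    have hzigzag : n ≤ f ⟨_, isMonoPath_zigzagPath h0 ha⟩ := le_card_incoherentIdx_zigzagPath
    have hδ0 : f δ = 0 := card_eq_zero.2 (δ.2.combCoherent_iff.1 hδ)
    omega
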